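/- Let N ≥ 1, let λ_1,…,λ_N be pairwise distinct positive reals, c_1,…,c_N positive reals, and (δ^{(n)})_{n≥0} a real sequence with δ^{(n)} > −min_j λ_j for all n, converging to a limit δ* satisfying 1 + δ*/λ_1 > 1 + δ*/λ_2 > ⋯ > 1 + δ*/λ_N > 0. Define moments μ_i^{(s,n)} := Σ_{j=1}^N c_j λ_j^{i+s} Π_{ℓ=0}^{n−1} (λ_j + δ^{(ℓ)}), Hankel determinants τ_0^{(s,n)} := 1, τ_i^{(s,n)} := det(μ_{j+k}^{(s,n)})_{j,k=0}^{i−1}, and set p_i^{(n)} := τ_i^{(−n,n)} τ_{i−1}^{(−n+1,n+1)} / (τ_{i−1}^{(−n,n+1)} τ_i^{(−n+1,n)}) and x_i^{(n)} := log( τ_i^{(−n,n)} τ_{i−1}^{(−n,n+1)} / (τ_{i−1}^{(−n+1,n)} τ_{i−1}^{(−n+1,n+1)}) ) for i = 1,…,N. Then: (a) lim_{n→∞} p_i^{(n)} = 1/λ_i for i = 1,…,N; (b) lim_{n→∞} (x_i^{(n+1)} − x_i^{(n)}) = log(1 + δ*/λ_i) for i = 1,…,N; (c) x_{i+1}^{(n)}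 − x_i^{(n)} → −∞ as n → ∞, for i = 1,…,N−1. -/

import Mathlib

open Finset Filter

/-- Moments μ_i^{(s,n)} := Σ_{j=1}^N c_j λ_j^{i+s} Π_{ℓ=0}^{n−1}(λ_j + δ^{(ℓ)}). -/
noncomputable def mom (N : ℕ) (lam c : ℕ → ℝ) (δ : ℕ → ℝ) (i : ℕ) (s : ℤ) (n : ℕ) : ℝ :=
  ∑ j ∈ Finset.Icc 1 N, c j * lam j ^ ((i : ℤ) + s) * ∏ l ∈ Finset.range n, (lam j + δ l)

/-- Hankel determinants τ_i^{(s,n)}. -/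
noncomputable def tauH (N : ℕ) (lam c : ℕ → ℝ) (δ : ℕ → ℝ) (i : ℕ) (s : ℤ) (n : ℕ) : ℝ :=
  Matrix.det (Matrix.of fun j k : Fin i => mom N lam c δ (j.1 + k.1) s n)

/-- p_i^{(n)} := τ_i^{(−n,n)} τ_{i−1}^{(−n+1,n+1)} / (τ_{i−1}^{(−n,n+1)} τ_i^{(−n+1,n)}). -/
noncomputable def pn (N : ℕ) (lam c : ℕ → ℝ) (δ : ℕ → ℝ) (i n : ℕ) : ℝ :=
  tauH N lam c δ i (-(n : ℤ)) n * tauH N lam c δ (i - 1) (-(n : ℤ) + 1) (n + 1) /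
    (tauH N lam c δ (i - 1) (-(n : ℤ)) (n + 1) * tauH N lam c δ i (-(n : ℤ) + 1) n)

/-- x_i^{(n)} := log( τ_i^{(−n,n)} τ_{i−1}^{(−n,n+1)} / (τ_{i−1}^{(−n+1,n)} τ_{i−1}^{(−n+1,n+1)}) ). -/
noncomputable def xn (N : ℕ) (lam c : ℕ → ℝ) (δ : ℕ → ℝ) (i n : ℕ) : ℝ :=
  Real.log (tauH N lam c δ i (-(n : ℤ)) n * tauH N lam c δ (i - 1) (-(n : ℤ)) (n + 1) /
    (tauH N lam c δ (i - 1) (-(n : ℤ) + 1) n * tauH N lam c δ (i - 1) (-(n : ℤ) + 1) (n + 1)))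

/-!
Write `Q_j(n) = ∏_{ℓ<n} (1 + δ^{(ℓ)}/λ_j)`. Then `μ_m^{(s,n)} = ∑_j c_j λ_j^{m+s+n} Q_j(n)`, so every
`τ_i^{(s,n)}` is the Hankel determinant of a discrete measure with positive weights, i.e. the
determinant of a positive definite Gram matrix, hence positive. Expanding this determinant
multilinearly in its rows writes it as a sum over `i`-element sets `T` of nodes, the term of `T`
carrying the factor `∏_{j∈T} Q_j(n)`. Since `1 + δ*/λ_j` is strictly decreasing in `j`, the ratio
`∏_{j∈T} Q_j(n) / ∏_{j≤i} Q_j(n)` tends to `0` unless `T = {1,…,i}`, so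
`τ_i^{(-n+t,n+u)} / ∏_{j≤i} Q_j(n+u)` tends to the Hankel determinant of the first `i` nodes with
weights `c_j λ_j^{t+u}`, which is `(λ_1⋯λ_i)^{t+u}` times a positive constant.

In `p_i^{(n)}` the normalisations cancel and the limit is `λ_1⋯λ_{i-1} / (λ_1⋯λ_i) = 1/λ_i`. In
`x_i^{(n)}` they leave `log Q_i(n) = ∑_{ℓ<n} log (1 + δ^{(ℓ)}/λ_i)` plus a convergent sequence;
this gives (b), and (c) follows because the partial sums of
`log (1 + δ^{(ℓ)}/λ_{i+1}) - log (1 + δ^{(ℓ)}/λ_i)`, whose terms have a negative limit, tend to `-∞`.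
-/

open Matrix Topology

noncomputable def hankelDet (J : Finset ℕ) (lam w : ℕ → ℝ) (i : ℕ) : ℝ :=
  det (of fun a b : Fin i => ∑ j ∈ J, w j * lam j ^ (a.1 + b.1))

noncomputable def hankelTerm (lam w : ℕ → ℝ) {i : ℕ} (r : Fin i → ℕ) : ℝ :=
  (∏ a, w (r a) * lam (r a) ^ (a : ℕ)) * (vandermonde fun a => lam (r a)).det

section Hankel

variable {lam w : ℕ → ℝ} {i : ℕ}

theorem hankelDet_eq_sum_hankelTerm (J : Finset ℕ) :
    hankelDet J lam w i = ∑ r ∈ Fintype.piFinset fun _ : Fin i => J, hankelTerm lam w r := by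
  let D := (detRowAlternating : (Fin i → ℝ) [⋀^Fin i]→ₗ[ℝ] ℝ).toMultilinearMap
  have hrows : hankelDet J lam w i =
      D fun a => ∑ j ∈ J, (w j * lam j ^ (a : ℕ)) • fun b : Fin i => lam j ^ (b : ℕ) := by
    refine congrArg det (ext fun a b => ?_)
    simp [pow_add, mul_assoc, Finset.sum_apply]
  rw [hrows, D.map_sum_finset]
  refine sum_congr rfl fun r _ => ?_
  rw [D.map_smul_univ, smul_eq_mul]
  rfl

theorem hankelTerm_eq_zero_of_not_injective {r : Fin i → ℕ} (h : ¬ Function.Injective r) :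
    hankelTerm lam w r = 0 := by
  obtain ⟨a, b, hab, hne⟩ := Function.not_injective_iff.1 h
  rw [hankelTerm, det_vandermonde_eq_zero_iff.2 ⟨a, b, by rw [hab], hne⟩, mul_zero]

theorem hankelTerm_mul (Q : ℕ → ℝ) (r : Fin i → ℕ) :
    hankelTerm lam (fun j => w j * Q j) r = (∏ a, Q (r a)) * hankelTerm lam w r := by
  simp only [hankelTerm, ← mul_assoc, ← prod_mul_distrib]
  congr 2 with a
  ring

theorem prod_comp_eq_prod_of_image_eq {S : Finset ℕ} {r : Fin i → ℕ} (hS : #S = i)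
    (h : image r univ = S) (Q : ℕ → ℝ) : ∏ a, Q (r a) = ∏ j ∈ S, Q j := by
  have hinj : Set.InjOn r (univ : Finset (Fin i)) :=
    card_image_iff.1 (by rw [h, hS, card_univ, Fintype.card_fin])
  rw [← h, prod_image hinj]

theorem hankelDet_eq_sum_ite_image_eq {J S : Finset ℕ} (hSJ : S ⊆ J) (hS : #S = i) :
    hankelDet S lam w i = ∑ r ∈ Fintype.piFinset (fun _ : Fin i => J),
      if image r univ = S then hankelTerm lam w r else 0 := by
  have hfilter : {r ∈ Fintype.piFinset fun _ : Fin i => J | image r univ = S} =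
      {r ∈ Fintype.piFinset fun _ : Fin i => S | image r univ = S} := by
    ext r
    simp only [mem_filter, Fintype.mem_piFinset]
    refine ⟨fun ⟨_, h⟩ => ⟨fun a => h ▸ mem_image_of_mem r (mem_univ a), h⟩,
      fun ⟨h, h'⟩ => ⟨fun a => hSJ (h a), h'⟩⟩
  rw [← sum_filter, hfilter, sum_filter_of_ne, hankelDet_eq_sum_hankelTerm]
  intro r hr hne
  have hinj : Function.Injective r := not_imp_comm.1 hankelTerm_eq_zero_of_not_injective hne
  refine eq_of_subset_of_card_le (fun j hj => ?_) ?_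
  · obtain ⟨a, -, rfl⟩ := mem_image.1 hj
    exact Fintype.mem_piFinset.1 hr a
  · rw [card_image_of_injective _ hinj, hS, card_univ, Fintype.card_fin]

theorem hankelDet_mul_of_card_eq {S : Finset ℕ} (hS : #S = i) (Q : ℕ → ℝ) :
    hankelDet S lam (fun j => w j * Q j) i = (∏ j ∈ S, Q j) * hankelDet S lam w i := by
  simp only [hankelDet_eq_sum_ite_image_eq subset_rfl hS, mul_sum, mul_ite, mul_zero]
  refine sum_congr rfl fun r _ => ?_
  split_ifs with h
  · rw [hankelTerm_mul, prod_comp_eq_prod_of_image_eq hS h]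
  · rfl

theorem hankelDet_mul_zpow_of_card_eq {S : Finset ℕ} (hS : #S = i) (e : ℤ) :
    hankelDet S lam (fun j => w j * lam j ^ e) i = (∏ j ∈ S, lam j) ^ e * hankelDet S lam w i := by
  rw [hankelDet_mul_of_card_eq hS, prod_zpow]

theorem tendsto_hankelDet_div_prod {J S : Finset ℕ} (hSJ : S ⊆ J) (hS : #S = i)
    {Q : ℕ → ℕ → ℝ} (hQ : ∀ n, ∏ j ∈ S, Q j n ≠ 0)
    (hdom : ∀ T ⊆ J, #T = i → T ≠ S →
      Tendsto (fun n => (∏ j ∈ T, Q j n) / ∏ j ∈ S, Q j n) atTop (𝓝 0)) :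
    Tendsto (fun n => hankelDet J lam (fun j => w j * Q j n) i / ∏ j ∈ S, Q j n) atTop
      (𝓝 (hankelDet S lam w i)) := by
  simp only [hankelDet_eq_sum_ite_image_eq hSJ hS, hankelDet_eq_sum_hankelTerm J, sum_div,
    hankelTerm_mul]
  refine tendsto_finsetSum _ fun r hr => ?_
  split_ifs with himg
  · have hprod n : ∏ a, Q (r a) n = ∏ j ∈ S, Q j n :=
      prod_comp_eq_prod_of_image_eq hS himg (Q · n)
    simp only [hprod, mul_div_cancel_left₀ _ (hQ _)]
    exact tendsto_const_nhds
  by_cases hinj : Function.Injective r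
  · have hT : image r univ ⊆ J := fun j hj => by
      obtain ⟨a, -, rfl⟩ := mem_image.1 hj
      exact Fintype.mem_piFinset.1 hr a
    have hcard : #(image r univ) = i := by
      rw [card_image_of_injective _ hinj, card_univ, Fintype.card_fin]
    have hprod n : ∏ a, Q (r a) n = ∏ j ∈ image r univ, Q j n :=
      prod_comp_eq_prod_of_image_eq hcard rfl (Q · n)
    simpa [hprod, mul_div_right_comm] using (hdom _ hT hcard himg).mul_const (hankelTerm lam w r)
  · simp [hankelTerm_eq_zero_of_not_injective hinj]

theorem hankelDet_pos {J : Finset ℕ} (hi : i ≤ #J)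
    (hinj : Set.InjOn lam J) (hw : ∀ j ∈ J, 0 < w j) : 0 < hankelDet J lam w i := by
  let V : Matrix J (Fin i) ℝ := of fun j a => lam j ^ (a : ℕ)
  have hV : Function.Injective V.mulVec := by
    refine (injective_iff_map_eq_zero V.mulVecLin).2 fun x hx => ?_
    let e : Fin i ↪ J := (Fin.castLEEmb (by simpa using hi)).trans J.equivFin.symm.toEmbedding
    refine eq_zero_of_forall_index_sum_pow_mul_eq_zero (f := fun a => lam (e a)) ?_
      fun a => congrFun hx (e a)
    exact fun a b hab => e.injective (Subtype.ext (hinj (e a).2 (e b).2 hab))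
  have hD : (diagonal fun j : J => w j).PosDef := posDef_diagonal_iff.2 fun j => hw j j.2
  have hgram : hankelDet J lam w i = (Vᴴ * diagonal (fun j : J => w j) * V).det := by
    refine congrArg det (ext fun a b => ?_)
    rw [of_apply, mul_apply, ← sum_coe_sort J]
    simp only [V, mul_diagonal, conjTranspose_apply, of_apply, star_trivial]
    exact sum_congr rfl fun j _ => by ring
  exact hgram ▸ (hD.conjTranspose_mul_mul_same hV).det_pos

end Hankel

theorem tendsto_sum_range_atBot_of_tendsto_neg {u : ℕ → ℝ} {L : ℝ} (hL : L < 0)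
    (h : Tendsto u atTop (𝓝 L)) : Tendsto (fun n => ∑ l ∈ range n, u l) atTop atBot := by
  refine (tendsto_natCast_atTop_atTop.atTop_mul_neg hL h.cesaro).congr' ?_
  filter_upwards [eventually_ne_atTop 0] with n hn
  rw [← mul_assoc, mul_inv_cancel₀ (Nat.cast_ne_zero.2 hn), one_mul]

theorem tendsto_prod_range_zero_of_tendsto {f : ℕ → ℝ} {r : ℝ} (hf : ∀ n, 0 < f n)
    (h : Tendsto f atTop (𝓝 r)) (hr0 : 0 < r) (hr1 : r < 1) :
    Tendsto (fun n => ∏ l ∈ range n, f l) atTop (𝓝 0) := by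
  have hlog := tendsto_sum_range_atBot_of_tendsto_neg (Real.log_neg hr0 hr1) (h.log hr0.ne')
  refine (Real.tendsto_exp_atBot.comp hlog).congr fun n => ?_
  simp [Real.exp_sum, Real.exp_log (hf _)]

theorem tendsto_prod_prod_range_div_zero {g : ℕ → ℕ → ℝ} {q : ℕ → ℝ} {S T : Finset ℕ}
    (hg : ∀ j ∈ S ∪ T, ∀ l, 0 < g j l) (hlim : ∀ j ∈ S ∪ T, Tendsto (g j) atTop (𝓝 (q j)))
    (hq : ∀ j ∈ S ∪ T, 0 < q j) (hlt : ∏ j ∈ T, q j < ∏ j ∈ S, q j) :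
    Tendsto (fun n => (∏ j ∈ T, ∏ l ∈ range n, g j l) / ∏ j ∈ S, ∏ l ∈ range n, g j l)
      atTop (𝓝 0) := by
  have hpos {U : Finset ℕ} (hU : U ⊆ S ∪ T) l : 0 < ∏ j ∈ U, g j l :=
    prod_pos fun j hj => hg j (hU hj) l
  have hqpos {U : Finset ℕ} (hU : U ⊆ S ∪ T) : 0 < ∏ j ∈ U, q j :=
    prod_pos fun j hj => hq j (hU hj)
  have hflim {U : Finset ℕ} (hU : U ⊆ S ∪ T) :
      Tendsto (fun l => ∏ j ∈ U, g j l) atTop (𝓝 (∏ j ∈ U, q j)) :=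
    tendsto_finsetProd _ fun j hj => hlim j (hU hj)
  have hS := subset_union_left (s₁ := S) (s₂ := T)
  have hT := subset_union_right (s₁ := S) (s₂ := T)
  refine (tendsto_prod_range_zero_of_tendsto (fun l => div_pos (hpos hT l) (hpos hS l))
    ((hflim hT).div (hflim hS) (hqpos hS).ne') (div_pos (hqpos hT) (hqpos hS))
    ((div_lt_one (hqpos hS)).2 hlt)).congr fun n => ?_
  rw [prod_div_distrib, prod_comm (s := range n), prod_comm (s := range n)]

theorem prod_lt_prod_of_card_eq_of_forall_lt {ι : Type*} {A B : Finset ι} {q : ι → ℝ}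
    (hcard : #A = #B) (hA : A.Nonempty) (hpos : ∀ j ∈ A, 0 < q j)
    (hlt : ∀ x ∈ A, ∀ y ∈ B, q x < q y) : ∏ j ∈ A, q j < ∏ j ∈ B, q j := by
  obtain ⟨m, hm, hmax⟩ := A.exists_max_image q hA
  calc ∏ j ∈ A, q j ≤ ∏ _j ∈ B, q m := by
        rw [prod_const, ← hcard, ← prod_const]
        exact prod_le_prod (fun j hj => (hpos j hj).le) hmax
    _ < ∏ j ∈ B, q j :=
        prod_lt_prod_of_nonempty (fun _ _ => hpos m hm) (hlt m hm)
          (card_pos.1 (hcard ▸ card_pos.2 hA))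

theorem prod_lt_prod_Icc_of_ne {N i : ℕ} {q : ℕ → ℝ} (hq : ∀ j ∈ Icc 1 N, 0 < q j)
    (hanti : StrictAntiOn q (Set.Icc 1 N)) {T : Finset ℕ} (hT : T ⊆ Icc 1 N) (hcard : #T = i)
    (hne : T ≠ Icc 1 i) : ∏ j ∈ T, q j < ∏ j ∈ Icc 1 i, q j := by
  have hS : #(Icc 1 i) = i := by rw [Nat.card_Icc, Nat.add_sub_cancel]
  have hsdiff : (T \ Icc 1 i).Nonempty := by
    refine nonempty_iff_ne_empty.2 fun h => hne (eq_of_subset_of_card_le ?_ (by omega))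
    exact sdiff_eq_empty_iff_subset.1 h
  have hlt : ∀ x ∈ T \ Icc 1 i, ∀ y ∈ Icc 1 i \ T, q x < q y := by
    intro x hx y hy
    obtain ⟨hxT, hxi⟩ := mem_sdiff.1 hx
    obtain ⟨hyi, -⟩ := mem_sdiff.1 hy
    have hxN := mem_Icc.1 (hT hxT)
    rw [mem_Icc] at hxi hyi
    exact hanti ⟨hyi.1, by omega⟩ ⟨hxN.1, hxN.2⟩ (by omega)
  rw [← prod_inter_mul_prod_sdiff T (Icc 1 i), ← prod_inter_mul_prod_sdiff (Icc 1 i) T, inter_comm]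
  refine mul_lt_mul_of_pos_left ?_ (prod_pos fun j hj => hq j (hT (mem_inter.1 hj).2))
  exact prod_lt_prod_of_card_eq_of_forall_lt (card_sdiff_comm (hcard.trans hS.symm)) hsdiff
    (fun j hj => hq j (hT (mem_sdiff.1 hj).1)) hlt

structure IsAdmissible (N : ℕ) (lam c δ : ℕ → ℝ) (δs : ℝ) : Prop where
  lam_pos : ∀ j ∈ Icc 1 N, 0 < lam j
  lam_injOn : Set.InjOn lam (Icc 1 N)
  c_pos : ∀ j ∈ Icc 1 N, 0 < c j
  factor_pos : ∀ j ∈ Icc 1 N, ∀ l, 0 < 1 + δ l / lam j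
  tendsto_δ : Tendsto δ atTop (𝓝 δs)
  strictAntiOn_limit : StrictAntiOn (fun j => 1 + δs / lam j) (Set.Icc 1 N)
  limit_pos : ∀ j ∈ Icc 1 N, 0 < 1 + δs / lam j

theorem IsAdmissible.of_chain {N : ℕ} {lam c δ : ℕ → ℝ} {δs : ℝ}
    (hlampos : ∀ j ∈ Icc 1 N, 0 < lam j)
    (hdist : ∀ j ∈ Icc 1 N, ∀ k ∈ Icc 1 N, j ≠ k → lam j ≠ lam k)
    (hcpos : ∀ j ∈ Icc 1 N, 0 < c j) (hδmin : ∀ n : ℕ, ∀ j ∈ Icc 1 N, -lam j < δ n)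
    (hδlim : Tendsto δ atTop (𝓝 δs))
    (hchain : ∀ j, 1 ≤ j → j < N → 1 + δs / lam (j + 1) < 1 + δs / lam j)
    (hlast : 0 < 1 + δs / lam N) : IsAdmissible N lam c δ δs := by
  have hanti : StrictAntiOn (fun j => 1 + δs / lam j) (Set.Icc 1 N) :=
    strictAntiOn_of_add_one_lt Set.ordConnected_Icc
      fun j _ hj hj1 => hchain j hj.1 (by simpa using hj1.2)
  refine ⟨hlampos, fun j hj k hk hjk => by_contra fun hne => hdist j hj k hk hne hjk, hcpos,
    fun j hj l => ?_, hδlim, hanti, fun j hj => ?_⟩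
  · rw [one_add_div (hlampos j hj).ne']
    exact div_pos (by linarith [hδmin l j hj]) (hlampos j hj)
  · obtain ⟨hj1, hjN⟩ := mem_Icc.1 hj
    exact hlast.trans_le (hanti.antitoneOn ⟨hj1, hjN⟩ ⟨hj1.trans hjN, le_rfl⟩ hjN)

noncomputable def relProd (lam δ : ℕ → ℝ) (j n : ℕ) : ℝ :=
  ∏ l ∈ range n, (1 + δ l / lam j)

noncomputable def normTau (N : ℕ) (lam c δ : ℕ → ℝ) (k : ℕ) (s : ℤ) (m : ℕ) : ℝ :=
  tauH N lam c δ k s m / ∏ j ∈ Icc 1 k, relProd lam δ j m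

noncomputable def normXArg (N : ℕ) (lam c δ : ℕ → ℝ) (k n : ℕ) : ℝ :=
  normTau N lam c δ (k + 1) (-n) n * normTau N lam c δ k (-n) (n + 1) /
    (normTau N lam c δ k (-n + 1) n * normTau N lam c δ k (-n + 1) (n + 1))

theorem tauH_eq_hankelDet {N : ℕ} {lam c δ : ℕ → ℝ} (hlam : ∀ j ∈ Icc 1 N, lam j ≠ 0)
    (i : ℕ) (s : ℤ) (m : ℕ) : tauH N lam c δ i s m =
      hankelDet (Icc 1 N) lam (fun j => c j * lam j ^ (s + m) * relProd lam δ j m) i := by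
  refine congrArg det (Matrix.ext fun a b => ?_)
  rw [of_apply, of_apply, mom]
  refine sum_congr rfl fun j hj => ?_
  have hlamj := hlam j hj
  have hprod : ∏ l ∈ range m, (lam j + δ l) = lam j ^ m * relProd lam δ j m :=
    calc ∏ l ∈ range m, (lam j + δ l) = ∏ l ∈ range m, lam j * (1 + δ l / lam j) :=
          prod_congr rfl fun l _ => by field_simp
      _ = lam j ^ m * relProd lam δ j m := by rw [prod_mul_distrib, prod_const, card_range, relProd]
  beta_reduce
  rw [hprod, zpow_add₀ hlamj, zpow_add₀ hlamj, zpow_natCast, zpow_natCast]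
  ring

namespace IsAdmissible

variable {N : ℕ} {lam c δ : ℕ → ℝ} {δs : ℝ}

theorem relProd_pos (h : IsAdmissible N lam c δ δs) {j : ℕ} (hj : j ∈ Icc 1 N) (n : ℕ) :
    0 < relProd lam δ j n :=
  prod_pos fun l _ => h.factor_pos j hj l

theorem prod_relProd_pos (h : IsAdmissible N lam c δ δs) {k : ℕ} (hk : k ≤ N) (m : ℕ) :
    0 < ∏ j ∈ Icc 1 k, relProd lam δ j m :=
  prod_pos fun _ hj => h.relProd_pos (Icc_subset_Icc le_rfl hk hj) m

theorem tauH_pos (h : IsAdmissible N lam c δ δs) {k : ℕ} (hk : k ≤ N) (s : ℤ) (m : ℕ) :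
    0 < tauH N lam c δ k s m := by
  rw [tauH_eq_hankelDet fun j hj => (h.lam_pos j hj).ne']
  refine hankelDet_pos (by simpa using hk) h.lam_injOn fun j hj => ?_
  exact mul_pos (mul_pos (h.c_pos j hj) (zpow_pos (h.lam_pos j hj) _)) (h.relProd_pos hj m)

theorem normTau_pos (h : IsAdmissible N lam c δ δs) {k : ℕ} (hk : k ≤ N) (s : ℤ) (m : ℕ) :
    0 < normTau N lam c δ k s m :=
  div_pos (h.tauH_pos hk s m) (h.prod_relProd_pos hk m)

theorem hankelDet_Icc_pos (h : IsAdmissible N lam c δ δs) {k : ℕ} (hk : k ≤ N) (e : ℤ) :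
    0 < hankelDet (Icc 1 k) lam (fun j => c j * lam j ^ e) k := by
  have hsub : Icc 1 k ⊆ Icc 1 N := Icc_subset_Icc le_rfl hk
  refine hankelDet_pos (by simp) (h.lam_injOn.mono (coe_subset.2 hsub)) fun j hj => ?_
  exact mul_pos (h.c_pos j (hsub hj)) (zpow_pos (h.lam_pos j (hsub hj)) e)

theorem tendsto_prod_relProd_div (h : IsAdmissible N lam c δ δs) {k : ℕ} {T : Finset ℕ}
    (hT : T ⊆ Icc 1 N) (hcard : #T = k) (hne : T ≠ Icc 1 k) :
    Tendsto (fun n => (∏ j ∈ T, relProd lam δ j n) / ∏ j ∈ Icc 1 k, relProd lam δ j n) atTop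
      (𝓝 0) := by
  have hk : Icc 1 k ⊆ Icc 1 N :=
    Icc_subset_Icc le_rfl (hcard ▸ by simpa using card_le_card hT)
  have hU : Icc 1 k ∪ T ⊆ Icc 1 N := union_subset hk hT
  exact tendsto_prod_prod_range_div_zero (fun j hj => h.factor_pos j (hU hj))
    (fun _ _ => tendsto_const_nhds.add (h.tendsto_δ.div_const _))
    (fun j hj => h.limit_pos j (hU hj))
    (prod_lt_prod_Icc_of_ne h.limit_pos h.strictAntiOn_limit hT hcard hne)

theorem tendsto_normTau (h : IsAdmissible N lam c δ δs) {k : ℕ} (hk : k ≤ N) {s : ℕ → ℤ}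
    {m : ℕ → ℕ} {e : ℤ} (hsm : ∀ n, s n + m n = e) (hm : Tendsto m atTop atTop) :
    Tendsto (fun n => normTau N lam c δ k (s n) (m n)) atTop
      (𝓝 (hankelDet (Icc 1 k) lam (fun j => c j * lam j ^ e) k)) := by
  simp only [normTau, tauH_eq_hankelDet fun j hj => (h.lam_pos j hj).ne', hsm]
  refine (tendsto_hankelDet_div_prod (Icc_subset_Icc le_rfl hk) (by simp)
    (fun n => (h.prod_relProd_pos hk n).ne') fun T hT hcard hne =>
      h.tendsto_prod_relProd_div hT hcard hne).comp hm

theorem tendsto_normTau_neg (h : IsAdmissible N lam c δ δs) {k : ℕ} (hk : k ≤ N) (u : ℕ) :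
    Tendsto (fun n : ℕ => normTau N lam c δ k (-n) (n + u)) atTop
      (𝓝 (hankelDet (Icc 1 k) lam (fun j => c j * lam j ^ (u : ℤ)) k)) :=
  h.tendsto_normTau hk (fun n => by push_cast; ring) (tendsto_add_atTop_nat u)

theorem tendsto_normTau_neg_add_one (h : IsAdmissible N lam c δ δs) {k : ℕ} (hk : k ≤ N)
    (u : ℕ) : Tendsto (fun n : ℕ => normTau N lam c δ k (-n + 1) (n + u)) atTop
      (𝓝 (hankelDet (Icc 1 k) lam (fun j => c j * lam j ^ ((u : ℤ) + 1)) k)) :=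
  h.tendsto_normTau hk (fun n => by push_cast; ring) (tendsto_add_atTop_nat u)

theorem tendsto_log_factor (h : IsAdmissible N lam c δ δs) {j : ℕ} (hj : j ∈ Icc 1 N) :
    Tendsto (fun l => Real.log (1 + δ l / lam j)) atTop (𝓝 (Real.log (1 + δs / lam j))) :=
  (tendsto_const_nhds.add (h.tendsto_δ.div_const _)).log (h.limit_pos j hj).ne'

theorem pn_eq (h : IsAdmissible N lam c δ δs) {k : ℕ} (hk : k + 1 ≤ N) (n : ℕ) :
    pn N lam c δ (k + 1) n =
      normTau N lam c δ (k + 1) (-n) n * normTau N lam c δ k (-n + 1) (n + 1) /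
        (normTau N lam c δ k (-n) (n + 1) * normTau N lam c δ (k + 1) (-n + 1) n) := by
  have := (h.prod_relProd_pos hk n).ne'
  have := (h.prod_relProd_pos (k := k) (by omega) (n + 1)).ne'
  simp only [pn, normTau, Nat.add_sub_cancel]
  field_simp

theorem xn_eq (h : IsAdmissible N lam c δ δs) {k : ℕ} (hk : k + 1 ≤ N) (n : ℕ) :
    xn N lam c δ (k + 1) n =
      Real.log (normXArg N lam c δ k n) + ∑ l ∈ range n, Real.log (1 + δ l / lam (k + 1)) := by
  have hmem : k + 1 ∈ Icc 1 N := by simp [hk]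
  have hsplit : ∏ j ∈ Icc 1 (k + 1), relProd lam δ j n =
      (∏ j ∈ Icc 1 k, relProd lam δ j n) * relProd lam δ (k + 1) n :=
    prod_Icc_succ_top (by omega) _
  have := (h.prod_relProd_pos (k := k) (by omega) n).ne'
  have := (h.prod_relProd_pos (k := k) (by omega) (n + 1)).ne'
  have harg : tauH N lam c δ (k + 1) (-n) n * tauH N lam c δ k (-n) (n + 1) /
      (tauH N lam c δ k (-n + 1) n * tauH N lam c δ k (-n + 1) (n + 1)) =
      normXArg N lam c δ k n * relProd lam δ (k + 1) n := by
    have := (h.relProd_pos hmem n).ne'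
    have := (h.tauH_pos (k := k) (by omega) (-n + 1) n).ne'
    have := (h.tauH_pos (k := k) (by omega) (-n + 1) (n + 1)).ne'
    simp only [normXArg, normTau, hsplit]
    field_simp
  have hX : 0 < normXArg N lam c δ k n := by
    have := h.normTau_pos (k := k) (by omega)
    exact div_pos (mul_pos (h.normTau_pos hk _ _) (this _ _)) (mul_pos (this _ _) (this _ _))
  rw [xn, Nat.add_sub_cancel, harg, Real.log_mul hX.ne' (h.relProd_pos hmem n).ne', relProd,
    Real.log_prod fun l _ => (h.factor_pos _ hmem l).ne']

theorem tendsto_log_normXArg (h : IsAdmissible N lam c δ δs) {k : ℕ} (hk : k + 1 ≤ N) :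
    ∃ L, Tendsto (fun n => Real.log (normXArg N lam c δ k n)) atTop (𝓝 L) := by
  have hk' : k ≤ N := by omega
  have hpos := h.hankelDet_Icc_pos hk'
  exact ⟨_, (((h.tendsto_normTau_neg hk 0).mul (h.tendsto_normTau_neg hk' 1)).div
    ((h.tendsto_normTau_neg_add_one hk' 0).mul (h.tendsto_normTau_neg_add_one hk' 1))
    (mul_pos (hpos _) (hpos _)).ne').log
    (div_pos (mul_pos (h.hankelDet_Icc_pos hk _) (hpos _)) (mul_pos (hpos _) (hpos _))).ne'⟩

theorem tendsto_pn (h : IsAdmissible N lam c δ δs) {k : ℕ} (hk : k + 1 ≤ N) :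
    Tendsto (fun n => pn N lam c δ (k + 1) n) atTop (𝓝 (1 / lam (k + 1))) := by
  have hk' : k ≤ N := by omega
  have hlim := ((h.tendsto_normTau_neg hk 0).mul (h.tendsto_normTau_neg_add_one hk' 1)).div
    ((h.tendsto_normTau_neg hk' 1).mul (h.tendsto_normTau_neg_add_one hk 0))
    (mul_pos (h.hankelDet_Icc_pos hk' _) (h.hankelDet_Icc_pos hk _)).ne'
  have hD {i : ℕ} (hi : i ≤ N) : 0 < hankelDet (Icc 1 i) lam c i := by
    simpa using h.hankelDet_Icc_pos hi 0
  have hΛ : 0 < ∏ j ∈ Icc 1 k, lam j :=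
    prod_pos fun j hj => h.lam_pos j (Icc_subset_Icc le_rfl hk' hj)
  have hlam := h.lam_pos (k + 1) (by simp [hk])
  have hD₀ := hD hk'
  have hD₁ := hD hk
  have hcard (i : ℕ) : #(Icc 1 i) = i := by simp
  simp only [hankelDet_mul_zpow_of_card_eq (hcard _), prod_Icc_succ_top (Nat.le_add_left 1 k)]
    at hlim
  refine (hlim.congr fun n => (h.pn_eq hk n).symm).trans (le_of_eq (congrArg 𝓝 ?_))
  push_cast
  simp only [zpow_zero, zpow_one, one_mul]
  field_simp

theorem tendsto_xn_succ_sub (h : IsAdmissible N lam c δ δs) {k : ℕ} (hk : k + 1 ≤ N) :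
    Tendsto (fun n => xn N lam c δ (k + 1) (n + 1) - xn N lam c δ (k + 1) n) atTop
      (𝓝 (Real.log (1 + δs / lam (k + 1)))) := by
  obtain ⟨L, hL⟩ := h.tendsto_log_normXArg hk
  have hlim := ((hL.comp (tendsto_add_atTop_nat 1)).sub hL).add
    (h.tendsto_log_factor (j := k + 1) (by simp [hk]))
  rw [sub_self, zero_add] at hlim
  refine hlim.congr fun n => ?_
  simp only [Function.comp, h.xn_eq hk, sum_range_succ]
  ring

theorem tendsto_xn_succ_sub_xn (h : IsAdmissible N lam c δ δs) {k : ℕ} (hk : k + 2 ≤ N) :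
    Tendsto (fun n => xn N lam c δ (k + 2) n - xn N lam c δ (k + 1) n) atTop atBot := by
  obtain ⟨L₁, hL₁⟩ := h.tendsto_log_normXArg (k := k + 1) hk
  obtain ⟨L₀, hL₀⟩ := h.tendsto_log_normXArg (k := k) (by omega)
  have hmem₁ : k + 1 ∈ Icc 1 N := mem_Icc.2 ⟨by omega, by omega⟩
  have hmem₂ : k + 2 ∈ Icc 1 N := mem_Icc.2 ⟨by omega, by omega⟩
  have hneg : Real.log (1 + δs / lam (k + 2)) - Real.log (1 + δs / lam (k + 1)) < 0 :=
    sub_neg.2 (Real.log_lt_log (h.limit_pos _ hmem₂)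
      (h.strictAntiOn_limit (by simpa using hmem₁) (by simpa using hmem₂) (by omega)))
  have hsum := tendsto_sum_range_atBot_of_tendsto_neg hneg
    ((h.tendsto_log_factor hmem₂).sub (h.tendsto_log_factor hmem₁))
  refine ((hL₁.sub hL₀).add_atBot hsum).congr fun n => ?_
  rw [h.xn_eq hk, h.xn_eq (by omega), sum_sub_distrib]
  ring

end IsAdmissible

theorem stmt19_general (N : ℕ) (lam c : ℕ → ℝ) (δ : ℕ → ℝ) (δs : ℝ)
    (hlampos : ∀ j ∈ Finset.Icc 1 N, 0 < lam j)
    (hdist : ∀ j ∈ Finset.Icc 1 N, ∀ k ∈ Finset.Icc 1 N, j ≠ k → lam j ≠ lam k)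
    (hcpos : ∀ j ∈ Finset.Icc 1 N, 0 < c j)
    (hδmin : ∀ n : ℕ, ∀ j ∈ Finset.Icc 1 N, -lam j < δ n)
    (hδlim : Tendsto δ atTop (nhds δs))
    (hchain : ∀ j, 1 ≤ j → j < N → 1 + δs / lam (j + 1) < 1 + δs / lam j)
    (hlast : 0 < 1 + δs / lam N) :
    (∀ i, 1 ≤ i → i ≤ N →
      Tendsto (fun n : ℕ => pn N lam c δ i n) atTop (nhds (1 / lam i))) ∧
    (∀ i, 1 ≤ i → i ≤ N →
      Tendsto (fun n : ℕ => xn N lam c δ i (n + 1) - xn N lam c δ i n) atTop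
        (nhds (Real.log (1 + δs / lam i)))) ∧
    (∀ i, 1 ≤ i → i ≤ N - 1 →
      Tendsto (fun n : ℕ => xn N lam c δ (i + 1) n - xn N lam c δ i n) atTop atBot) := by
  have h := IsAdmissible.of_chain hlampos hdist hcpos hδmin hδlim hchain hlast
  refine ⟨fun i hi hiN => ?_, fun i hi hiN => ?_, fun i hi hiN => ?_⟩ <;>
    obtain ⟨k, rfl⟩ := Nat.exists_eq_add_of_le' hi
  · exact h.tendsto_pn hiN
  · exact h.tendsto_xn_succ_sub hiN
  · exact h.tendsto_xn_succ_sub_xn (by omega)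

theorem stmt19 (N : ℕ) (hN : 1 ≤ N) (lam c : ℕ → ℝ) (δ : ℕ → ℝ) (δs : ℝ)
    (hlampos : ∀ j ∈ Finset.Icc 1 N, 0 < lam j)
    (hdist : ∀ j ∈ Finset.Icc 1 N, ∀ k ∈ Finset.Icc 1 N, j ≠ k → lam j ≠ lam k)
    (hcpos : ∀ j ∈ Finset.Icc 1 N, 0 < c j)
    (hδmin : ∀ n : ℕ, ∀ j ∈ Finset.Icc 1 N, -lam j < δ n)
    (hδlim : Tendsto δ atTop (nhds δs))
    (hchain : ∀ j, 1 ≤ j → j < N → 1 + δs / lam (j + 1) < 1 + δs / lam j)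
    (hlast : 0 < 1 + δs / lam N) :
    (∀ i, 1 ≤ i → i ≤ N →
      Tendsto (fun n : ℕ => pn N lam c δ i n) atTop (nhds (1 / lam i))) ∧
    (∀ i, 1 ≤ i → i ≤ N →
      Tendsto (fun n : ℕ => xn N lam c δ i (n + 1) - xn N lam c δ i n) atTop
        (nhds (Real.log (1 + δs / lam i)))) ∧
    (∀ i, 1 ≤ i → i ≤ N - 1 →
      Tendsto (fun n : ℕ => xn N lam c δ (i + 1) n - xn N lam c δ i n) atTop atBot) :=
  stmt19_general N lam c δ δs hlampos hdist hcpos hδmin hδlim hchain hlast
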